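/- arXiv:2504.16431 — 9 statements merged into one kernel-verified Lean document; each statement's English description precedes it below -/
import Mathlib

section
/- Let S be a finite type, let G be a connected simple graph on S, and let p and q be probability mass functions on S with full support. If for every pair of adjacent vertices x and y one has p y * q x = q y * p x (equivalently p y / p x = q y / q x), then p = q. -/
/-- Completeness of the concrete score: if two full-support pmfs `p` and `q` on a finite
type `S` have equal probability ratios along every edge of a connected simple graph `G`
(i.e. `p y * q x = q y * p x` for adjacent `x, y`), then `p = q`. -/
theorem concrete_score_completeness {S : Type*} [Fintype S]
    (G : SimpleGraph S) (hG : G.Connected)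
    (p q : S → ℝ)
    (hp_pos : ∀ x, 0 < p x) (hq_pos : ∀ x, 0 < q x)
    (hp_sum : ∑ x, p x = 1) (hq_sum : ∑ x, q x = 1)
    (hratio : ∀ x y, G.Adj x y → p y * q x = q y * p x) :
    p = q := by
  obtain ⟨x0⟩ := hG.nonempty
  have walkkey : ∀ {a b : S}, G.Walk a b → p b * q a = q b * p a := by
    intro a b w
    induction w with
    | nil => exact mul_comm _ _
    | @cons a b c hab _ ih =>
      have h1 := hratio a b hab
      have h2 : p c * q a * (p b * q b) = q c * p a * (p b * q b) := by
        linear_combination q a * p b * ih + q c * p b * h1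
      exact mul_right_cancel₀ (mul_pos (hp_pos b) (hq_pos b)).ne' h2
  have key : ∀ x, p x * q x0 = q x * p x0 := fun x => walkkey (hG x0 x).some
  have hsum : (∑ x, p x) * q x0 = (∑ x, q x) * p x0 := by
    rw [Finset.sum_mul, Finset.sum_mul]
    exact Finset.sum_congr rfl fun x _ => key x
  rw [hp_sum, hq_sum, one_mul, one_mul] at hsum
  funext x
  have := key x
  rw [hsum] at this
  exact mul_right_cancel₀ (hp_pos x0).ne' this
end

section
/- Let T and S be finite nonempty types, let G be a connected simple graph on S, let μ : T → ℝ satisfy μ t ≥ 0 for all t, and for each t : T let p t, q t and h t be pmfs on S with full support. Define d(u,v) = u * Real.log (u / v) − u + v for u, v > 0, and define the objective 𝓛 = ∑ t, μ t * ∑ x, h t x * ∑_{y adjacent to x in G} d( p t y / p t x , q t y / q t x ). Then 𝓛 ≥ 0, and 𝓛 = 0 if and only if p t = q t for every t with μ t > 0. -/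
/-!
The integrand `d(u, v) = u log (u / v) - u + v` equals `v · klFun (u / v)` with
`klFun x = x log x + 1 - x ≥ 0`, which vanishes only at `x = 1`; hence `𝓛 ≥ 0`, and `𝓛 = 0`
forces the concrete scores of `p t` and `q t` to agree along every edge whenever `μ t > 0`.
Agreement of `p t y / p t x` and `q t y / q t x` on an edge says that `p t / q t` takes the same
value at its two ends, so on a connected graph `p t = c · q t`, and normalisation gives `c = 1`.
-/

open Finset Real InformationTheory

noncomputable def genKLDiv (u v : ℝ) : ℝ := u * log (u / v) - u + v

lemma genKLDiv_eq_mul_klFun (u : ℝ) {v : ℝ} (hv : v ≠ 0) :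
    genKLDiv u v = v * klFun (u / v) := by
  rw [genKLDiv, klFun_apply]
  field_simp
  ring

lemma genKLDiv_nonneg {u v : ℝ} (hu : 0 ≤ u) (hv : 0 < v) : 0 ≤ genKLDiv u v := by
  rw [genKLDiv_eq_mul_klFun u hv.ne']
  exact mul_nonneg hv.le (klFun_nonneg (div_nonneg hu hv.le))

lemma genKLDiv_eq_zero_iff {u v : ℝ} (hu : 0 ≤ u) (hv : 0 < v) :
    genKLDiv u v = 0 ↔ u = v := by
  rw [genKLDiv_eq_mul_klFun u hv.ne', mul_eq_zero, or_iff_right hv.ne',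
    klFun_eq_zero_iff (div_nonneg hu hv.le), div_eq_one_iff_eq hv.ne']

lemma Finset.sum_mul_eq_zero_iff_of_nonneg {ι R : Type*} [Semiring R] [PartialOrder R]
    [IsOrderedRing R] [NoZeroDivisors R] {s : Finset ι} {w f : ι → R}
    (hw : ∀ i ∈ s, 0 ≤ w i) (hf : ∀ i ∈ s, 0 ≤ f i) :
    ∑ i ∈ s, w i * f i = 0 ↔ ∀ i ∈ s, 0 < w i → f i = 0 := by
  rw [sum_eq_zero_iff_of_nonneg fun i hi => mul_nonneg (hw i hi) (hf i hi)]
  refine forall₂_congr fun i hi => ?_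
  rw [mul_eq_zero, (hw i hi).lt_iff_ne', or_iff_not_imp_left]

lemma SimpleGraph.Reachable.eq_of_forall_adj {V α : Type*} {G : SimpleGraph V} {f : V → α}
    (hf : ∀ x y, G.Adj x y → f x = f y) {u v : V} (huv : G.Reachable u v) : f u = f v := by
  obtain ⟨w⟩ := huv
  induction w with
  | nil => rfl
  | cons hadj _ ih => exact (hf _ _ hadj).trans ih

lemma eq_of_forall_div_eq_of_sum_eq {ι : Type*} [Fintype ι] {f g : ι → ℝ}
    (hg : ∀ i, 0 < g i) (hfg : ∀ i j, f i / g i = f j / g j) (hsum : ∑ i, f i = ∑ i, g i) :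
    f = g := by
  funext x
  have hf : ∀ i, f i = f x / g x * g i := fun i => by
    rw [← hfg i x, div_mul_cancel₀ _ (hg i).ne']
  have hsum_pos : 0 < ∑ i, g i := sum_pos (fun i _ => hg i) ⟨x, mem_univ x⟩
  have hc : f x / g x = 1 := by
    rwa [sum_congr rfl fun i _ => hf i, ← mul_sum, mul_eq_right₀ hsum_pos.ne'] at hsum
  rwa [div_eq_one_iff_eq (hg x).ne'] at hc

namespace SimpleGraph

variable {S : Type*} [Fintype S] (G : SimpleGraph S) [DecidableRel G.Adj]

section ConcreteScore

noncomputable def concreteScoreKL (p q : S → ℝ) (x : S) : ℝ :=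
  ∑ y ∈ G.neighborFinset x, genKLDiv (p y / p x) (q y / q x)

variable {G} {p q : S → ℝ}

lemma concreteScoreKL_nonneg (hp : ∀ x, 0 ≤ p x) (hq : ∀ x, 0 < q x) (x : S) :
    0 ≤ G.concreteScoreKL p q x :=
  sum_nonneg fun y _ => genKLDiv_nonneg (div_nonneg (hp y) (hp x)) (div_pos (hq y) (hq x))

lemma concreteScoreKL_eq_zero_iff (hp : ∀ x, 0 ≤ p x) (hq : ∀ x, 0 < q x) (x : S) :
    G.concreteScoreKL p q x = 0 ↔ ∀ y, G.Adj x y → p y / p x = q y / q x := by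
  rw [concreteScoreKL, sum_eq_zero_iff_of_nonneg fun y _ =>
    genKLDiv_nonneg (div_nonneg (hp y) (hp x)) (div_pos (hq y) (hq x))]
  simp only [mem_neighborFinset,
    genKLDiv_eq_zero_iff (div_nonneg (hp _) (hp x)) (div_pos (hq _) (hq x))]

lemma sum_mul_concreteScoreKL_eq_zero_iff (hG : G.Preconnected) (hp : ∀ x, 0 < p x)
    (hq : ∀ x, 0 < q x) (hsum : ∑ x, p x = ∑ x, q x) {h : S → ℝ} (hh : ∀ x, 0 < h x) :
    ∑ x, h x * G.concreteScoreKL p q x = 0 ↔ p = q := by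
  rw [sum_mul_eq_zero_iff_of_nonneg (fun x _ => (hh x).le)
    (fun x _ => concreteScoreKL_nonneg (fun x => (hp x).le) hq x)]
  simp only [mem_univ, hh, forall_const, concreteScoreKL_eq_zero_iff (fun x => (hp x).le) hq]
  refine ⟨fun hscore => eq_of_forall_div_eq_of_sum_eq hq (fun x y => ?_) hsum, ?_⟩
  · refine (hG x y).eq_of_forall_adj (f := fun x => p x / q x) fun x y hxy => ?_
    exact ((div_eq_div_iff_div_eq_div' (hp x).ne' (hq y).ne').mp (hscore x y hxy)).symm
  · rintro rfl x y _
    rfl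

end ConcreteScore

noncomputable def tcsmObjective {T : Type*} [Fintype T] (μ : T → ℝ) (p q h : T → S → ℝ) :
    ℝ :=
  ∑ t, μ t * ∑ x, h t x * G.concreteScoreKL (p t) (q t) x

variable {G} {T : Type*} [Fintype T] {μ : T → ℝ} {p q h : T → S → ℝ}

lemma tcsmObjective_nonneg (hμ : ∀ t, 0 ≤ μ t) (hp : ∀ t x, 0 ≤ p t x)
    (hq : ∀ t x, 0 < q t x) (hh : ∀ t x, 0 ≤ h t x) : 0 ≤ G.tcsmObjective μ p q h :=
  sum_nonneg fun t _ => mul_nonneg (hμ t) <| sum_nonneg fun x _ =>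
    mul_nonneg (hh t x) (concreteScoreKL_nonneg (hp t) (hq t) x)

lemma tcsmObjective_eq_zero_iff (hG : G.Preconnected) (hμ : ∀ t, 0 ≤ μ t)
    (hp : ∀ t x, 0 < p t x) (hq : ∀ t x, 0 < q t x) (hsum : ∀ t, ∑ x, p t x = ∑ x, q t x)
    (hh : ∀ t x, 0 < h t x) :
    G.tcsmObjective μ p q h = 0 ↔ ∀ t, 0 < μ t → p t = q t := by
  rw [tcsmObjective, sum_mul_eq_zero_iff_of_nonneg (fun t _ => hμ t) fun t _ =>
    sum_nonneg fun x _ =>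
      mul_nonneg (hh t x).le (concreteScoreKL_nonneg (fun x => (hp t x).le) (hq t) x)]
  simp only [mem_univ, true_imp_iff,
    sum_mul_concreteScoreKL_eq_zero_iff hG (hp _) (hq _) (hsum _) (hh _)]

end SimpleGraph

theorem tcsm_objective_nonneg_and_eq_zero_iff_general
    {T S : Type*} [Fintype T] [Fintype S]
    (G : SimpleGraph S) [DecidableRel G.Adj] (hG : G.Connected)
    (μ : T → ℝ) (hμ : ∀ t, 0 ≤ μ t)
    (p q h : T → S → ℝ)
    (hp_pos : ∀ t x, 0 < p t x) (hp_sum : ∀ t, ∑ x, p t x = 1)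
    (hq_pos : ∀ t x, 0 < q t x) (hq_sum : ∀ t, ∑ x, q t x = 1)
    (hh_pos : ∀ t x, 0 < h t x) :
    0 ≤ (∑ t, μ t * ∑ x, h t x * ∑ y ∈ G.neighborFinset x,
          (p t y / p t x * Real.log ((p t y / p t x) / (q t y / q t x))
            - p t y / p t x + q t y / q t x)) ∧
    ((∑ t, μ t * ∑ x, h t x * ∑ y ∈ G.neighborFinset x,
          (p t y / p t x * Real.log ((p t y / p t x) / (q t y / q t x))
            - p t y / p t x + q t y / q t x)) = 0 ↔
      ∀ t, 0 < μ t → p t = q t) :=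
  -- both sides are `G.tcsmObjective μ p q h` with the definitions unfolded
  ⟨G.tcsmObjective_nonneg hμ (fun t x => (hp_pos t x).le) hq_pos fun t x => (hh_pos t x).le,
    G.tcsmObjective_eq_zero_iff hG.preconnected hμ hp_pos hq_pos
      (fun t => (hp_sum t).trans (hq_sum t).symm) hh_pos⟩

/-- The TCSM objective with generalized-KL Bregman divergence
`d(u,v) = u * log (u/v) - u + v` applied to concrete scores along a connected graph is
nonnegative, and it vanishes iff the model `q t` equals the target `p t` for every
`t` with positive weight `μ t`. -/
theorem tcsm_objective_nonneg_and_eq_zero_iff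
    {T S : Type*} [Fintype T] [Nonempty T] [Fintype S] [Nonempty S]
    (G : SimpleGraph S) [DecidableRel G.Adj] (hG : G.Connected)
    (μ : T → ℝ) (hμ : ∀ t, 0 ≤ μ t)
    (p q h : T → S → ℝ)
    (hp_pos : ∀ t x, 0 < p t x) (hp_sum : ∀ t, ∑ x, p t x = 1)
    (hq_pos : ∀ t x, 0 < q t x) (hq_sum : ∀ t, ∑ x, q t x = 1)
    (hh_pos : ∀ t x, 0 < h t x) (hh_sum : ∀ t, ∑ x, h t x = 1) :
    0 ≤ (∑ t, μ t * ∑ x, h t x * ∑ y ∈ G.neighborFinset x,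
          (p t y / p t x * Real.log ((p t y / p t x) / (q t y / q t x))
            - p t y / p t x + q t y / q t x)) ∧
    ((∑ t, μ t * ∑ x, h t x * ∑ y ∈ G.neighborFinset x,
          (p t y / p t x * Real.log ((p t y / p t x) / (q t y / q t x))
            - p t y / p t x + q t y / q t x)) = 0 ↔
      ∀ t, 0 < μ t → p t = q t) :=
  tcsm_objective_nonneg_and_eq_zero_iff_general G hG μ hμ p q h hp_pos hp_sum hq_pos hq_sum hh_pos
end

section
/- Let L ≥ 1, let X be a finite type, and let p and q be pmfs on Fin L → X with full support. Then the following are equivalent: (a) for every position i : Fin L, every x : Fin L → X and every v : X, p (Function.update x i v) / p x = q (Function.update x i v) / q x; (b) for every position i and every x, the single-site conditionals agree, i.e. for all v, p (Function.update x i v) / (∑ w, p (Function.update x i w)) = q (Function.update x i v) / (∑ w, q (Function.update x i w)); (c) p = q. -/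
private lemma tcsm_aux (L : ℕ)
    (X : Type*) [Fintype X] [DecidableEq X]
    (p q : (Fin L → X) → ℝ)
    (hp_pos : ∀ x, 0 < p x) (hq_pos : ∀ x, 0 < q x)
    (ha : ∀ (i : Fin L) (x : Fin L → X) (v : X),
        p (Function.update x i v) / p x = q (Function.update x i v) / q x) :
    ∀ (s : Finset (Fin L)) (x y : Fin L → X), (∀ i ∉ s, x i = y i) →
      p y * q x = q y * p x := by
  intro s
  induction s using Finset.induction with
  | empty =>
    intro x y h
    have : x = y := funext fun i => h i (by simp)
    rw [this]; ring
  | @insert i t hi ih =>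
    intro x y h
    set z := Function.update x i (y i) with hz
    have hzy : p y * q z = q y * p z := by
      apply ih
      intro j hj
      by_cases hji : j = i
      · subst hji; simp [hz]
      · have hjs : j ∉ insert i t := by simp [hji, hj]
        simp [hz, Function.update_of_ne hji, h j hjs]
    have hxz : p z * q x = q z * p x := by
      have h' := ha i x (y i)
      rwa [div_eq_div_iff (hp_pos x).ne' (hq_pos x).ne'] at h'
    have h2 : (p y * q x) * (p z * q z) = (q y * p x) * (p z * q z) := by
      calc (p y * q x) * (p z * q z) = (p y * q z) * (p z * q x) := by ring
      _ = (q y * p z) * (q z * p x) := by rw [hzy, hxz]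
      _ = (q y * p x) * (p z * q z) := by ring
    exact mul_right_cancel₀ (mul_pos (hp_pos z) (hq_pos z)).ne' h2

/-- Equivalence of score-based and distribution-based TCSM at the 1-Hamming
neighborhood: for full-support pmfs `p q` on sequences `Fin L → X`, the following are
equivalent: (a) all single-site concrete scores agree, (b) all single-site conditional
distributions agree, (c) `p = q`. -/
theorem tcsm_score_distrib_equiv (L : ℕ) (hL : 1 ≤ L)
    (X : Type*) [Fintype X] [DecidableEq X]
    (p q : (Fin L → X) → ℝ)
    (hp_pos : ∀ x, 0 < p x) (hp_sum : ∑ x, p x = 1)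
    (hq_pos : ∀ x, 0 < q x) (hq_sum : ∑ x, q x = 1) :
    List.TFAE [
      (∀ (i : Fin L) (x : Fin L → X) (v : X),
        p (Function.update x i v) / p x = q (Function.update x i v) / q x),
      (∀ (i : Fin L) (x : Fin L → X) (v : X),
        p (Function.update x i v) / (∑ w, p (Function.update x i w)) =
          q (Function.update x i v) / (∑ w, q (Function.update x i w))),
      p = q ] := by
  have hXne : Nonempty X := by
    by_contra h
    have hE : IsEmpty X := not_nonempty_iff.mp h
    have : IsEmpty (Fin L → X) := ⟨fun f => hE.false (f ⟨0, hL⟩)⟩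
    rw [Finset.univ_eq_empty, Finset.sum_empty] at hp_sum
    norm_num at hp_sum
  tfae_have 1 → 3 := by
    intro ha
    have key : ∀ x y, p y * q x = q y * p x := fun x y =>
      tcsm_aux L X p q hp_pos hq_pos ha Finset.univ x y (by simp)
    funext x
    have h1 : (∑ y, p y) * q x = (∑ y, q y) * p x := by
      rw [Finset.sum_mul, Finset.sum_mul]
      exact Finset.sum_congr rfl fun y _ => key x y
    rw [hp_sum, hq_sum, one_mul, one_mul] at h1
    linarith
  tfae_have 3 → 2 := by
    intro h; subst h; intro i x v; rfl
  tfae_have 2 → 1 := by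
    intro hb i x v
    have hSp : 0 < ∑ w, p (Function.update x i w) :=
      Finset.sum_pos (fun w _ => hp_pos _) Finset.univ_nonempty
    have hSq : 0 < ∑ w, q (Function.update x i w) :=
      Finset.sum_pos (fun w _ => hq_pos _) Finset.univ_nonempty
    have h1 := hb i x v
    have h2 := hb i x (x i)
    rw [Function.update_eq_self] at h2
    rw [div_eq_div_iff hSp.ne' hSq.ne'] at h1 h2
    rw [div_eq_div_iff (hp_pos x).ne' (hq_pos x).ne']
    set pu := p (Function.update x i v)
    set qu := q (Function.update x i v)
    set Sp := ∑ w, p (Function.update x i w)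
    set Sq := ∑ w, q (Function.update x i w)
    have h3 : (pu * q x) * (Sp * Sq) = (qu * p x) * (Sp * Sq) := by
      calc (pu * q x) * (Sp * Sq) = (pu * Sq) * (q x * Sp) := by ring
      _ = (qu * Sp) * (p x * Sq) := by rw [h1, h2]
      _ = (qu * p x) * (Sp * Sq) := by ring
    exact mul_right_cancel₀ (mul_pos hSp hSq).ne' h3
  tfae_finish
end

section
/- Let X be a finite type with card X = V, let L ≥ 1, fix a position i : Fin L, and let p and q be pmfs on S = Fin L → X with full support. For x : S and v : X set w(x,v) = p (Function.update x i v) / p x and w'(x,v) = q (Function.update x i v) / q x. Then ∑_{x : S} p x * ∑_{v : X} ( w(x,v) * Real.log (w(x,v) / w'(x,v)) − w(x,v) + w'(x,v) ) = ∑_{x : S} p x * ( V * KL(p_i(·∣x) ‖ q_i(·∣x)) + IS(p_i(·∣x) ‖ q_i(·∣x)) ), where p_i(·∣x) and q_i(·∣x) are the single-site conditionals of p and q at position i given x. -/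
open Finset

/-- Inner algebra for the LHS summand. -/
private lemma tcsm_inner_lhs {X : Type*} [Fintype X] (px qx : ℝ) (hpx : 0 < px) (hqx : 0 < qx)
    (P Q : X → ℝ) (hP : ∀ v, 0 < P v) (hQ : ∀ v, 0 < Q v) :
    px * ∑ v, ((P v / px) * Real.log ((P v / px) / (Q v / qx)) - P v / px + Q v / qx)
      = (∑ v, P v * Real.log (P v / Q v))
        - (∑ v, P v) * Real.log (px / qx)
        - (∑ v, P v)
        + (px / qx) * (∑ v, Q v) := by
  have key : ∀ v : X,
      px * ((P v / px) * Real.log ((P v / px) / (Q v / qx)) - P v / px + Q v / qx)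
      = P v * Real.log (P v / Q v) - P v * Real.log (px / qx) - P v + (px / qx) * Q v := by
    intro v
    rw [div_div_div_comm, Real.log_div (div_pos (hP v) (hQ v)).ne' (div_pos hpx hqx).ne']
    have h1 : px ≠ 0 := hpx.ne'
    have h2 : qx ≠ 0 := hqx.ne'
    field_simp
  rw [Finset.mul_sum, Finset.sum_congr rfl fun v _ => key v]
  rw [Finset.sum_add_distrib, Finset.sum_sub_distrib, Finset.sum_sub_distrib,
      ← Finset.sum_mul, ← Finset.mul_sum]

/-- Inner algebra for the RHS summand. -/
private lemma tcsm_inner_rhs {X : Type*} [Fintype X] (V : ℕ) (hV : Fintype.card X = V)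
    (px : ℝ) (P Q : X → ℝ) (hP : ∀ v, 0 < P v) (hQ : ∀ v, 0 < Q v)
    (hSP : 0 < ∑ v, P v) (hSQ : 0 < ∑ v, Q v) :
    px * ((V : ℝ) * (∑ v, (P v / ∑ w, P w) * Real.log ((P v / ∑ w, P w) / (Q v / ∑ w, Q w)))
        + (∑ v, ((P v / ∑ w, P w) / (Q v / ∑ w, Q w)
            - Real.log ((P v / ∑ w, P w) / (Q v / ∑ w, Q w)) - 1)))
      = px * (V : ℝ) / (∑ w, P w) * (∑ v, P v * Real.log (P v / Q v))
        + px * ((∑ w, Q w) / (∑ w, P w)) * (∑ v, P v / Q v)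
        - px * (∑ v, Real.log (P v / Q v))
        - px * (V : ℝ) := by
  have hSP' : (∑ w, P w) ≠ 0 := hSP.ne'
  have hSQ' : (∑ w, Q w) ≠ 0 := hSQ.ne'
  have hlog : ∀ v : X, Real.log ((P v / ∑ w, P w) / (Q v / ∑ w, Q w))
      = Real.log (P v / Q v) - Real.log ((∑ w, P w) / (∑ w, Q w)) := by
    intro v
    rw [div_div_div_comm, Real.log_div (div_pos (hP v) (hQ v)).ne' (div_pos hSP hSQ).ne']
  have hdiv : ∀ v : X, (P v / ∑ w, P w) / (Q v / ∑ w, Q w)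
      = (P v / Q v) * ((∑ w, Q w) / (∑ w, P w)) := by
    intro v
    rw [div_div_div_comm, div_div_eq_mul_div, mul_div_assoc]
  have h1 : (∑ v, (P v / ∑ w, P w) * Real.log ((P v / ∑ w, P w) / (Q v / ∑ w, Q w)))
      = (∑ v, P v * Real.log (P v / Q v)) / (∑ w, P w)
        - Real.log ((∑ w, P w) / (∑ w, Q w)) := by
    have step : ∀ v : X, (P v / ∑ w, P w) * Real.log ((P v / ∑ w, P w) / (Q v / ∑ w, Q w))
        = (P v * Real.log (P v / Q v)) / (∑ w, P w)
          - (P v / ∑ w, P w) * Real.log ((∑ w, P w) / (∑ w, Q w)) := by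
      intro v; rw [hlog v]; ring
    rw [Finset.sum_congr rfl fun v _ => step v, Finset.sum_sub_distrib, ← Finset.sum_div,
        ← Finset.sum_mul, ← Finset.sum_div, div_self hSP', one_mul]
  have h2 : (∑ v, ((P v / ∑ w, P w) / (Q v / ∑ w, Q w)
        - Real.log ((P v / ∑ w, P w) / (Q v / ∑ w, Q w)) - 1))
      = ((∑ w, Q w) / (∑ w, P w)) * (∑ v, P v / Q v)
        - (∑ v, Real.log (P v / Q v))
        + (V : ℝ) * Real.log ((∑ w, P w) / (∑ w, Q w)) - (V : ℝ) := by
    have step : ∀ v : X, ((P v / ∑ w, P w) / (Q v / ∑ w, Q w)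
          - Real.log ((P v / ∑ w, P w) / (Q v / ∑ w, Q w)) - 1)
        = ((∑ w, Q w) / (∑ w, P w)) * (P v / Q v)
          - Real.log (P v / Q v) + Real.log ((∑ w, P w) / (∑ w, Q w)) - 1 := by
      intro v; rw [hlog v, hdiv v]; ring
    rw [Finset.sum_congr rfl fun v _ => step v]
    rw [Finset.sum_sub_distrib, Finset.sum_add_distrib, Finset.sum_sub_distrib,
        ← Finset.mul_sum]
    simp [Finset.card_univ, hV, mul_comm]
  rw [h1, h2]
  ring

private def tcsmFlip {X : Type*} [DecidableEq X] {L : ℕ} (i : Fin L) :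
    ((Fin L → X) × X) ≃ ((Fin L → X) × X) where
  toFun z := (Function.update z.1 i z.2, z.1 i)
  invFun z := (Function.update z.1 i z.2, z.1 i)
  left_inv z := by
    simp [Function.update_idem]
  right_inv z := by
    simp [Function.update_idem]

private lemma tcsm_sum_flip {X : Type*} [Fintype X] [DecidableEq X] {L : ℕ} (i : Fin L)
    (G : ((Fin L → X) × X) → ℝ) :
    ∑ x : Fin L → X, ∑ v : X, G (Function.update x i v, x i)
      = ∑ x : Fin L → X, ∑ v : X, G (x, v) := by
  calc ∑ x : Fin L → X, ∑ v : X, G (Function.update x i v, x i)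
      = ∑ z : (Fin L → X) × X, G (tcsmFlip i z) :=
        (Fintype.sum_prod_type fun z => G (tcsmFlip (X := X) i z)).symm
    _ = ∑ z : (Fin L → X) × X, G z := Equiv.sum_comp (tcsmFlip i) G
    _ = ∑ x : Fin L → X, ∑ v : X, G (x, v) := Fintype.sum_prod_type G

/-- Score-based TCSM with generalized KL divergence under the true proposal equals the
distribution-based objective with divergence `V * KL + IS` (Proposition 3.3).
Here the single-site conditionals are
`p_i(v ∣ x) = p (update x i v) / ∑ w, p (update x i w)` and similarly for `q`. -/
theorem tcsm_score_gkl_eq_distrib_VKL_IS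
    (X : Type*) [Fintype X] [DecidableEq X] (V : ℕ) (hV : Fintype.card X = V)
    (L : ℕ) (hL : 1 ≤ L) (i : Fin L)
    (p q : (Fin L → X) → ℝ)
    (hp_pos : ∀ x, 0 < p x) (hp_sum : ∑ x, p x = 1)
    (hq_pos : ∀ x, 0 < q x) (hq_sum : ∑ x, q x = 1) :
    (∑ x, p x * ∑ v,
        ((p (Function.update x i v) / p x) *
            Real.log ((p (Function.update x i v) / p x) /
              (q (Function.update x i v) / q x))
          - p (Function.update x i v) / p x
          + q (Function.update x i v) / q x)) =
    ∑ x, p x *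
      ((V : ℝ) *
          (∑ v, (p (Function.update x i v) / ∑ w, p (Function.update x i w)) *
            Real.log ((p (Function.update x i v) / ∑ w, p (Function.update x i w)) /
              (q (Function.update x i v) / ∑ w, q (Function.update x i w))))
        + (∑ v,
            ((p (Function.update x i v) / ∑ w, p (Function.update x i w)) /
                (q (Function.update x i v) / ∑ w, q (Function.update x i w))
              - Real.log ((p (Function.update x i v) / ∑ w, p (Function.update x i w)) /
                  (q (Function.update x i v) / ∑ w, q (Function.update x i w)))
              - 1))) := by
  classical
  have hne : Nonempty (Fin L → X) := by
    by_contra h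
    rw [not_nonempty_iff] at h
    rw [Finset.univ_eq_empty, Finset.sum_empty] at hp_sum
    exact one_ne_zero hp_sum.symm
  have hXne : Nonempty X := ⟨Classical.arbitrary (Fin L → X) i⟩
  have hSP : ∀ x : Fin L → X, 0 < ∑ w, p (Function.update x i w) :=
    fun x => Finset.sum_pos (fun w _ => hp_pos _) Finset.univ_nonempty
  have hSQ : ∀ x : Fin L → X, 0 < ∑ w, q (Function.update x i w) :=
    fun x => Finset.sum_pos (fun w _ => hq_pos _) Finset.univ_nonempty
  -- Rewrite left-hand side per x
  have hL1 : (∑ x, p x * ∑ v,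
        ((p (Function.update x i v) / p x) *
            Real.log ((p (Function.update x i v) / p x) /
              (q (Function.update x i v) / q x))
          - p (Function.update x i v) / p x
          + q (Function.update x i v) / q x))
      = ∑ x, ((∑ v, p (Function.update x i v) *
              Real.log (p (Function.update x i v) / q (Function.update x i v)))
          - (∑ w, p (Function.update x i w)) * Real.log (p x / q x)
          - (∑ w, p (Function.update x i w))
          + (p x / q x) * (∑ w, q (Function.update x i w))) :=
    Finset.sum_congr rfl fun x _ =>
      tcsm_inner_lhs (p x) (q x) (hp_pos x) (hq_pos x)
        (fun v => p (Function.update x i v)) (fun v => q (Function.update x i v))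
        (fun v => hp_pos _) (fun v => hq_pos _)
  -- Rewrite right-hand side per x
  have hL2 : (∑ x, p x *
      ((V : ℝ) *
          (∑ v, (p (Function.update x i v) / ∑ w, p (Function.update x i w)) *
            Real.log ((p (Function.update x i v) / ∑ w, p (Function.update x i w)) /
              (q (Function.update x i v) / ∑ w, q (Function.update x i w))))
        + (∑ v,
            ((p (Function.update x i v) / ∑ w, p (Function.update x i w)) /
                (q (Function.update x i v) / ∑ w, q (Function.update x i w))
              - Real.log ((p (Function.update x i v) / ∑ w, p (Function.update x i w)) /
                  (q (Function.update x i v) / ∑ w, q (Function.update x i w)))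
              - 1))))
      = ∑ x, (p x * (V : ℝ) / (∑ w, p (Function.update x i w)) *
            (∑ v, p (Function.update x i v) *
              Real.log (p (Function.update x i v) / q (Function.update x i v)))
          + p x * ((∑ w, q (Function.update x i w)) / (∑ w, p (Function.update x i w))) *
            (∑ v, p (Function.update x i v) / q (Function.update x i v))
          - p x * (∑ v, Real.log (p (Function.update x i v) / q (Function.update x i v)))
          - p x * (V : ℝ)) :=
    Finset.sum_congr rfl fun x _ =>
      tcsm_inner_rhs V hV (p x)
        (fun v => p (Function.update x i v)) (fun v => q (Function.update x i v))
        (fun v => hp_pos _) (fun v => hq_pos _) (hSP x) (hSQ x)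
  rw [hL1, hL2]
  rw [Finset.sum_add_distrib, Finset.sum_sub_distrib, Finset.sum_sub_distrib,
      Finset.sum_sub_distrib, Finset.sum_sub_distrib, Finset.sum_add_distrib]
  -- the four exchange identities
  have hA : (∑ x, ∑ v, p (Function.update x i v) *
        Real.log (p (Function.update x i v) / q (Function.update x i v)))
      = ∑ x, p x * (V : ℝ) / (∑ w, p (Function.update x i w)) *
          (∑ v, p (Function.update x i v) *
            Real.log (p (Function.update x i v) / q (Function.update x i v))) := by
    have h := tcsm_sum_flip i (fun z => (p z.1 / ∑ w, p (Function.update z.1 i w)) *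
      (∑ v, p (Function.update z.1 i v) *
        Real.log (p (Function.update z.1 i v) / q (Function.update z.1 i v))))
    simp only [Function.update_idem] at h
    calc (∑ x, ∑ v, p (Function.update x i v) *
          Real.log (p (Function.update x i v) / q (Function.update x i v)))
        = ∑ x, ∑ v : X, (p (Function.update x i v) / ∑ w, p (Function.update x i w)) *
            (∑ v', p (Function.update x i v') *
              Real.log (p (Function.update x i v') / q (Function.update x i v'))) := by
          refine Finset.sum_congr rfl fun x _ => ?_
          rw [← Finset.sum_mul, ← Finset.sum_div, div_self (hSP x).ne', one_mul]
      _ = ∑ x, ∑ v : X, (p x / ∑ w, p (Function.update x i w)) *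
            (∑ v', p (Function.update x i v') *
              Real.log (p (Function.update x i v') / q (Function.update x i v'))) := h
      _ = ∑ x, p x * (V : ℝ) / (∑ w, p (Function.update x i w)) *
            (∑ v, p (Function.update x i v) *
              Real.log (p (Function.update x i v) / q (Function.update x i v))) := by
          refine Finset.sum_congr rfl fun x _ => ?_
          rw [Finset.sum_const, Finset.card_univ, hV, nsmul_eq_mul]
          ring
  have hB : (∑ x, (∑ w, p (Function.update x i w)) * Real.log (p x / q x))
      = ∑ x, p x * (∑ v, Real.log (p (Function.update x i v) / q (Function.update x i v))) := by
    have h := tcsm_sum_flip i (fun z => p z.1 *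
      Real.log (p (Function.update z.1 i z.2) / q (Function.update z.1 i z.2)))
    simp only [Function.update_idem, Function.update_eq_self] at h
    calc (∑ x, (∑ w, p (Function.update x i w)) * Real.log (p x / q x))
        = ∑ x, ∑ v, p (Function.update x i v) * Real.log (p x / q x) := by
          simp [Finset.sum_mul]
      _ = ∑ x, ∑ v, p x *
            Real.log (p (Function.update x i v) / q (Function.update x i v)) := h
      _ = ∑ x, p x *
            (∑ v, Real.log (p (Function.update x i v) / q (Function.update x i v))) := by
          simp [Finset.mul_sum]
  have hC : (∑ x, ∑ w, p (Function.update x i w)) = ∑ x, p x * (V : ℝ) := by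
    have h := tcsm_sum_flip i (fun z => p z.1)
    calc (∑ x, ∑ w, p (Function.update x i w)) = ∑ x : Fin L → X, ∑ _v : X, p x := h
      _ = ∑ x, p x * (V : ℝ) := by
          refine Finset.sum_congr rfl fun x _ => ?_
          rw [Finset.sum_const, Finset.card_univ, hV, nsmul_eq_mul]
          ring
  have hD : (∑ x, (p x / q x) * (∑ w, q (Function.update x i w)))
      = ∑ x, p x * ((∑ w, q (Function.update x i w)) / (∑ w, p (Function.update x i w))) *
          (∑ v, p (Function.update x i v) / q (Function.update x i v)) := by
    have h := tcsm_sum_flip i (fun z => p (Function.update z.1 i z.2) *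
      ((∑ w, q (Function.update z.1 i w)) / (∑ w, p (Function.update z.1 i w))) *
      (p z.1 / q z.1))
    simp only [Function.update_idem, Function.update_eq_self] at h
    calc (∑ x, (p x / q x) * (∑ w, q (Function.update x i w)))
        = ∑ x, ∑ v, p (Function.update x i v) *
            ((∑ w, q (Function.update x i w)) / (∑ w, p (Function.update x i w))) *
            (p x / q x) := by
          refine Finset.sum_congr rfl fun x _ => ?_
          rw [← Finset.sum_mul, ← Finset.sum_mul]
          have h1 : (∑ w, p (Function.update x i w)) ≠ 0 := (hSP x).ne'
          have h2 : q x ≠ 0 := (hq_pos x).ne'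
          field_simp
      _ = ∑ x, ∑ v, p x *
            ((∑ w, q (Function.update x i w)) / (∑ w, p (Function.update x i w))) *
            (p (Function.update x i v) / q (Function.update x i v)) := h.symm
      _ = ∑ x, p x * ((∑ w, q (Function.update x i w)) / (∑ w, p (Function.update x i w))) *
            (∑ v, p (Function.update x i v) / q (Function.update x i v)) := by
          refine Finset.sum_congr rfl fun x _ => ?_
          rw [Finset.mul_sum]
  rw [hA, hB, hC, hD]
  ring
end

section
/- Let X be a finite type with card X = V ≥ 1, and let a and b be full-support probability vectors on X. Then V * KL(a‖b) + IS(a‖b) = V * ∑_{x} a x * ( −Real.log (b x) + 1 / (V * b x) + (1/V) * ∑_{y} Real.log (b y) ) + C(a), where C(a) = V * ∑_{x} a x * Real.log (a x) − ∑_{x} Real.log (a x) − V depends only on a. -/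
/-- Monte-Carlo decomposition (Proposition 4.1): for full-support probability vectors
`a, b` on a finite type of cardinality `V ≥ 1`,
`V * KL(a‖b) + IS(a‖b)` equals `V` times the expectation under `a` of the
pseudo-likelihood term `-log (b x) + 1 / (V * b x)` plus the entropy-like term
`(1/V) * ∑ y, log (b y)`, up to a constant `C(a)` depending only on `a`. -/
theorem tcsm_gkl_pseudo_entropy_decomposition
    (X : Type*) [Fintype X] (V : ℕ) (hV : Fintype.card X = V) (hV1 : 1 ≤ V)
    (a b : X → ℝ)
    (ha_pos : ∀ x, 0 < a x) (ha_sum : ∑ x, a x = 1)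
    (hb_pos : ∀ x, 0 < b x) (hb_sum : ∑ x, b x = 1) :
    (V : ℝ) * (∑ x, a x * Real.log (a x / b x))
        + (∑ x, (a x / b x - Real.log (a x / b x) - 1)) =
      (V : ℝ) * ∑ x, a x *
          (-Real.log (b x) + 1 / ((V : ℝ) * b x)
            + (1 / (V : ℝ)) * ∑ y, Real.log (b y))
        + ((V : ℝ) * (∑ x, a x * Real.log (a x))
            - (∑ x, Real.log (a x)) - (V : ℝ)) := by
  have hVpos : (0:ℝ) < V := by exact_mod_cast hV1
  have hVne : (V:ℝ) ≠ 0 := ne_of_gt hVpos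
  have h1 : ∑ x, a x * Real.log (a x / b x)
      = ∑ x, a x * Real.log (a x) - ∑ x, a x * Real.log (b x) := by
    rw [← Finset.sum_sub_distrib]
    refine Finset.sum_congr rfl fun x _ => ?_
    rw [Real.log_div (ha_pos x).ne' (hb_pos x).ne']; ring
  have h2 : ∑ x, (a x / b x - Real.log (a x / b x) - 1)
      = ∑ x, a x / b x - (∑ x, Real.log (a x) - ∑ x, Real.log (b x)) - (V:ℝ) := by
    have hl : ∑ x, Real.log (a x / b x) = ∑ x, Real.log (a x) - ∑ x, Real.log (b x) := by
      rw [← Finset.sum_sub_distrib]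
      exact Finset.sum_congr rfl fun x _ => Real.log_div (ha_pos x).ne' (hb_pos x).ne'
    rw [Finset.sum_sub_distrib, Finset.sum_sub_distrib, Finset.sum_const, Finset.card_univ, hV,
      nsmul_eq_mul, mul_one, hl]
  have h3 : ∑ x, a x *
        (-Real.log (b x) + 1 / ((V : ℝ) * b x)
          + (1 / (V : ℝ)) * ∑ y, Real.log (b y))
      = -∑ x, a x * Real.log (b x) + (1/(V:ℝ)) * ∑ x, a x / b x
          + (1/(V:ℝ)) * ∑ y, Real.log (b y) := by
    have : ∀ x, a x *
        (-Real.log (b x) + 1 / ((V : ℝ) * b x)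
          + (1 / (V : ℝ)) * ∑ y, Real.log (b y))
        = -(a x * Real.log (b x)) + (1/(V:ℝ)) * (a x / b x)
          + ((1/(V:ℝ)) * ∑ y, Real.log (b y)) * a x := by
      intro x
      field_simp
    simp only [this]
    rw [Finset.sum_add_distrib, Finset.sum_add_distrib, Finset.sum_neg_distrib,
      ← Finset.mul_sum, ← Finset.mul_sum, ha_sum, mul_one]
  rw [h1, h2, h3]
  field_simp
  ring
end

section
/- Let X be a finite type, let p and p_ref be pmfs on X with p_ref of full support, set r x = p x / p_ref x, let s : X → ℝ, and let F : ℝ → ℝ be differentiable at every value s x and every value r x. Then ∑_{x} p_ref x * ( F (r x) − F (s x) − deriv F (s x) * (r x − s x) ) = ( ∑_{x} p_ref x * ( deriv F (s x) * s x − F (s x) ) − ∑_{x} p x * deriv F (s x) ) + ∑_{x} p_ref x * F (r x). In particular, as a function of s, the expected scalar Bregman divergence between r and s under p_ref equals the practical density-ratio-estimation objective plus a constant independent of s. -/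
/-- Expected scalar Bregman divergence between the true density ratio `r = p / p_ref`
and a candidate ratio model `s`, under `p_ref`, equals the practical density-ratio
estimation objective plus a constant independent of `s`. -/
theorem bregman_dre_objective_decomposition {X : Type*} [Fintype X]
    (p pref : X → ℝ)
    (hp_nonneg : ∀ x, 0 ≤ p x) (hp_sum : ∑ x, p x = 1)
    (href_pos : ∀ x, 0 < pref x) (href_sum : ∑ x, pref x = 1)
    (r : X → ℝ) (hr : ∀ x, r x = p x / pref x)
    (s : X → ℝ) (F : ℝ → ℝ)
    (hFs : ∀ x, DifferentiableAt ℝ F (s x)) (hFr : ∀ x, DifferentiableAt ℝ F (r x)) :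
    ∑ x, pref x * (F (r x) - F (s x) - deriv F (s x) * (r x - s x)) =
      ((∑ x, pref x * (deriv F (s x) * s x - F (s x)))
          - ∑ x, p x * deriv F (s x))
        + ∑ x, pref x * F (r x) := by
  rw [← Finset.sum_sub_distrib, ← Finset.sum_add_distrib]
  apply Finset.sum_congr rfl
  intro x _
  have hpr : pref x * r x = p x := by
    rw [hr x]; field_simp [(href_pos x).ne']
  linear_combination (-(deriv F (s x))) * hpr
end

section
/- Let X be a finite type, let p and p_ref be full-support pmfs on X, set r x = p x / p_ref x, and let s : X → ℝ. With F(u) = (u − 1)² / 2, the expected Bregman divergence satisfies ∑_{x} p_ref x * ( F (r x) − F (s x) − (s x − 1) * (r x − s x) ) = ∑_{x} p_ref x * (s x)² / 2 − ∑_{x} p x * s x + ( 1/2 + ∑_{x} p_ref x * (r x − 1)² / 2 ), where the last bracket is a constant independent of s. -/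
/-- LSIF density-ratio-estimation objective: with `F(u) = (u - 1)^2 / 2`
(whose derivative is `u - 1`), the expected Bregman divergence between the true ratio
`r = p / p_ref` and a candidate `s` under `p_ref` equals
`E_{p_ref}[s^2/2] - E_p[s]` plus a constant independent of `s`. -/
theorem lsif_dre_objective_decomposition {X : Type*} [Fintype X]
    (p pref : X → ℝ)
    (hp_pos : ∀ x, 0 < p x) (hp_sum : ∑ x, p x = 1)
    (href_pos : ∀ x, 0 < pref x) (href_sum : ∑ x, pref x = 1)
    (r : X → ℝ) (hr : ∀ x, r x = p x / pref x)
    (s : X → ℝ) :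
    ∑ x, pref x * ((r x - 1) ^ 2 / 2 - (s x - 1) ^ 2 / 2 - (s x - 1) * (r x - s x)) =
      (∑ x, pref x * (s x) ^ 2 / 2) - (∑ x, p x * s x)
        + (1 / 2 + ∑ x, pref x * (r x - 1) ^ 2 / 2) := by
  have key : ∀ x, pref x * ((r x - 1) ^ 2 / 2 - (s x - 1) ^ 2 / 2 - (s x - 1) * (r x - s x)) =
      pref x * (s x) ^ 2 / 2 - p x * s x + (pref x * (r x - 1) ^ 2 / 2 - pref x / 2 + p x) := by
    intro x
    have hpr : pref x * r x = p x := by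
      rw [hr x, mul_div_cancel₀ _ (href_pos x).ne']
    nlinarith [hpr]
  calc ∑ x, pref x * ((r x - 1) ^ 2 / 2 - (s x - 1) ^ 2 / 2 - (s x - 1) * (r x - s x))
      = ∑ x, (pref x * (s x) ^ 2 / 2 - p x * s x
          + (pref x * (r x - 1) ^ 2 / 2 - pref x / 2 + p x)) := by
        exact Finset.sum_congr rfl fun x _ => key x
    _ = (∑ x, pref x * (s x) ^ 2 / 2) - (∑ x, p x * s x)
        + ((∑ x, pref x * (r x - 1) ^ 2 / 2) - (∑ x, pref x) / 2 + ∑ x, p x) := by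
        simp [Finset.sum_add_distrib, Finset.sum_sub_distrib, Finset.sum_div]
    _ = _ := by rw [hp_sum, href_sum]; ring
end

section
/- Let α σ : ℝ with α ≠ 0 and σ > 0, and let p₁ : ℝ → ℝ be everywhere positive and differentiable. Define the Gaussian kernel k z z₁ = (2 * π * σ^2)^(-(1:ℝ)/2) * Real.exp ( −(z − α * z₁)^2 / (2 * σ^2) ) and the noisy marginal q z = ∫ z₁, k z z₁ * p₁ z₁. Fix z : ℝ and assume: (i) q z > 0; (ii) q has derivative at z equal to ∫ z₁, ( −(z − α * z₁) / σ^2 ) * k z z₁ * p₁ z₁ (differentiation under the integral sign holds); (iii) ∫ z₁, deriv (fun w => k z w * p₁ w) z₁ = 0 (the boundary term vanishes); (iv) the functions z₁ ↦ ((z − α * z₁) / σ^2) * k z z₁ * p₁ z₁ and z₁ ↦ k z z₁ * deriv p₁ z₁ are integrable on ℝ. Then deriv (fun w => Real.log (q w)) z = (1/α) * ∫ z₁, ( deriv p₁ z₁ / p₁ z₁ ) * ( k z z₁ * p₁ z₁ / q z ). -/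
open MeasureTheory

/-! Differentiating the Gaussian kernel in the clean variable gives `∂_{z₁} k = -α ∂_z k`, so the
derivative of `q` under the integral sign is `-(1/α) ∫ ∂_{z₁} k · p₁`. Integrating by parts, with
the boundary term vanishing, turns this into `(1/α) ∫ k · p₁'`, and dividing by `q z` (using
`p₁ > 0` to write `p₁' = (p₁'/p₁) p₁`) gives the posterior expectation of the clean score. -/

theorem hasDerivAt_const_mul_exp_neg_sq_div (c z α s w : ℝ) :
    HasDerivAt (fun w => c * Real.exp (-(z - α * w) ^ 2 / (2 * s)))
      (α * ((z - α * w) / s) * (c * Real.exp (-(z - α * w) ^ 2 / (2 * s)))) w := by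
  have hlin : HasDerivAt (fun w => z - α * w) (-α) w := by
    simpa using ((hasDerivAt_id w).const_mul α).const_sub z
  refine (((hlin.pow 2).neg.div_const (2 * s)).exp.const_mul c).congr_deriv ?_
  simp only [Pi.neg_apply, Pi.pow_apply]
  rw [← mul_div_mul_left (z - α * w) s two_ne_zero]
  ring

theorem integral_deriv_mul_eq_neg_integral_mul_deriv {f g f' g' : ℝ → ℝ}
    (hf : ∀ x, HasDerivAt f (f' x) x) (hg : ∀ x, HasDerivAt g (g' x) x)
    (hf'g : Integrable fun x => f' x * g x) (hfg' : Integrable fun x => f x * g' x)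
    (hboundary : ∫ x, deriv (fun x => f x * g x) x = 0) :
    ∫ x, f' x * g x = -∫ x, f x * g' x := by
  have hderiv : ∀ x, deriv (fun x => f x * g x) x = f' x * g x + f x * g' x :=
    fun x => ((hf x).mul (hg x)).deriv
  simp_rw [hderiv] at hboundary
  rw [integral_add hf'g hfg'] at hboundary
  linarith

theorem integral_div_mul_div_eq_integral_mul_div {p k s : ℝ → ℝ} (hp : ∀ x, p x ≠ 0) (c : ℝ) :
    ∫ x, (s x / p x) * (k x * p x / c) = (∫ x, k x * s x) / c := by
  rw [← integral_div]
  congr 1 with x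
  field_simp [hp x]

theorem target_score_matching_identity_general
    (α σ : ℝ) (hα : α ≠ 0)
    (p₁ : ℝ → ℝ) (hp₁_pos : ∀ z, 0 < p₁ z) (hp₁_diff : Differentiable ℝ p₁)
    (k : ℝ → ℝ → ℝ)
    (hk : ∀ z z₁, k z z₁ =
      (2 * Real.pi * σ ^ 2) ^ (-(1 : ℝ) / 2) *
        Real.exp (-(z - α * z₁) ^ 2 / (2 * σ ^ 2)))
    (q : ℝ → ℝ)
    (z : ℝ) (hqz : 0 < q z)
    (hq_deriv : HasDerivAt q (∫ z₁, (-(z - α * z₁) / σ ^ 2) * k z z₁ * p₁ z₁) z)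
    (hboundary : (∫ z₁, deriv (fun w => k z w * p₁ w) z₁) = 0)
    (hint1 : Integrable (fun z₁ => ((z - α * z₁) / σ ^ 2) * k z z₁ * p₁ z₁))
    (hint2 : Integrable (fun z₁ => k z z₁ * deriv p₁ z₁)) :
    deriv (fun w => Real.log (q w)) z =
      (1 / α) * ∫ z₁, (deriv p₁ z₁ / p₁ z₁) * (k z z₁ * p₁ z₁ / q z) := by
  set I := ∫ z₁, ((z - α * z₁) / σ ^ 2) * k z z₁ * p₁ z₁
  have hk_deriv : ∀ w, HasDerivAt (k z) (α * ((z - α * w) / σ ^ 2) * k z w) w := fun w => by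
    rw [show k z = _ from funext (hk z)]
    exact hasDerivAt_const_mul_exp_neg_sq_div _ z α (σ ^ 2) w
  have hparts : α * I = -∫ z₁, k z z₁ * deriv p₁ z₁ := by
    rw [← integral_const_mul]
    simp_rw [← mul_assoc]
    exact integral_deriv_mul_eq_neg_integral_mul_deriv hk_deriv
      (fun w => (hp₁_diff w).hasDerivAt) (by simpa only [← mul_assoc] using hint1.const_mul α)
      hint2 hboundary
  have hderiv_q : deriv q z = -I := by
    rw [hq_deriv.deriv, ← integral_neg]
    congr 1 with z₁
    ring
  have hscore : -I = 1 / α * ∫ z₁, k z z₁ * deriv p₁ z₁ := by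
    field_simp
    linarith
  rw [(hq_deriv.log hqz.ne').deriv, ← hq_deriv.deriv, hderiv_q, hscore,
    integral_div_mul_div_eq_integral_mul_div (fun x => (hp₁_pos x).ne'), mul_div_assoc]

/-- Target Score Matching identity (continuous, 1-dimensional): for a Gaussian noising
kernel `k z z₁ = (2πσ²)^{-1/2} exp(-(z - α z₁)²/(2σ²))` and noisy marginal
`q z = ∫ z₁, k z z₁ * p₁ z₁`, under differentiation-under-the-integral, vanishing
boundary term and integrability assumptions, the score of the noisy marginal at `z`
equals `1/α` times the posterior expectation of the clean score `(deriv p₁) / p₁`. -/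
theorem target_score_matching_identity
    (α σ : ℝ) (hα : α ≠ 0) (hσ : 0 < σ)
    (p₁ : ℝ → ℝ) (hp₁_pos : ∀ z, 0 < p₁ z) (hp₁_diff : Differentiable ℝ p₁)
    (k : ℝ → ℝ → ℝ)
    (hk : ∀ z z₁, k z z₁ =
      (2 * Real.pi * σ ^ 2) ^ (-(1 : ℝ) / 2) *
        Real.exp (-(z - α * z₁) ^ 2 / (2 * σ ^ 2)))
    (q : ℝ → ℝ) (hq : ∀ z, q z = ∫ z₁, k z z₁ * p₁ z₁)
    (z : ℝ) (hqz : 0 < q z)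
    (hq_deriv : HasDerivAt q (∫ z₁, (-(z - α * z₁) / σ ^ 2) * k z z₁ * p₁ z₁) z)
    (hboundary : (∫ z₁, deriv (fun w => k z w * p₁ w) z₁) = 0)
    (hint1 : Integrable (fun z₁ => ((z - α * z₁) / σ ^ 2) * k z z₁ * p₁ z₁))
    (hint2 : Integrable (fun z₁ => k z z₁ * deriv p₁ z₁)) :
    deriv (fun w => Real.log (q w)) z =
      (1 / α) * ∫ z₁, (deriv p₁ z₁ / p₁ z₁) * (k z z₁ * p₁ z₁ / q z) :=
  target_score_matching_identity_general α σ hα p₁ hp₁_pos hp₁_diff k hk q z hqz hq_deriv hboundary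
    hint1 hint2
end

section
/- Let S be a finite type, let p₁ be a pmf on S, and fix t₀ : ℝ. For each a : S let P a : ℝ → S → ℝ be a family of functions and u a : S → S → ℝ be such that for every y : S the function t ↦ P a t y has derivative at t₀ equal to ∑_{x} u a y x * P a t₀ x. Define the marginal m t y = ∑_{a} p₁ a * P a t y and assume m t₀ x > 0 for all x : S. Define the posterior π a x = p₁ a * P a t₀ x / m t₀ x and the marginal velocity U y x = ∑_{a} u a y x * π a x. Then for every y : S, the function t ↦ m t y has derivative at t₀ equal to ∑_{x} U y x * m t₀ x. -/
open Finset

theorem sum_mul_div_mul_cancel {ι K : Type*} [Field K] (s : Finset ι) (f g : ι → K) {c : K}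
    (hc : c ≠ 0) : (∑ a ∈ s, f a * (g a / c)) * c = ∑ a ∈ s, f a * g a := by
  rw [sum_mul]
  refine sum_congr rfl fun a _ => ?_
  rw [mul_assoc, div_mul_cancel₀ _ hc]

/-- Multiplying the posterior `w a * q a x / m x` back by `m x` undoes the Bayes normalisation,
so the averaged rate acting on `m` is the `w`-mixture of the conditional rates acting on `q a`. -/
theorem sum_posterior_rate_mul_eq_mixture {S ι : Type*} [Fintype S] [Fintype ι]
    (w : ι → ℝ) (q : ι → S → ℝ) (r : ι → S → ℝ) (m : S → ℝ) (hm : ∀ x, m x ≠ 0) :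
    ∑ x, (∑ a, r a x * (w a * q a x / m x)) * m x = ∑ a, w a * ∑ x, r a x * q a x := by
  calc ∑ x, (∑ a, r a x * (w a * q a x / m x)) * m x
      = ∑ x, ∑ a, r a x * (w a * q a x) := sum_congr rfl fun x _ =>
        sum_mul_div_mul_cancel _ _ _ (hm x)
    _ = ∑ a, w a * ∑ x, r a x * q a x := by
        rw [sum_comm]
        simp_rw [mul_sum]
        exact sum_congr rfl fun a _ => sum_congr rfl fun x _ => by ring

theorem marginal_velocity_identity_general {S : Type*} [Fintype S]
    (p₁ : S → ℝ)
    (t₀ : ℝ)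
    (P : S → ℝ → S → ℝ) (u : S → S → S → ℝ)
    (hP : ∀ a y, HasDerivAt (fun t => P a t y) (∑ x, u a y x * P a t₀ x) t₀)
    (m : ℝ → S → ℝ) (hm : ∀ t y, m t y = ∑ a, p₁ a * P a t y)
    (hm_pos : ∀ x, 0 < m t₀ x)
    (post : S → S → ℝ) (hpost : ∀ a x, post a x = p₁ a * P a t₀ x / m t₀ x)
    (U : S → S → ℝ) (hU : ∀ y x, U y x = ∑ a, u a y x * post a x) :
    ∀ y : S, HasDerivAt (fun t => m t y) (∑ x, U y x * m t₀ x) t₀ := by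
  intro y
  have hrate : ∑ x, U y x * m t₀ x = ∑ a, p₁ a * ∑ x, u a y x * P a t₀ x := by
    simp only [hU, hpost]
    exact sum_posterior_rate_mul_eq_mixture p₁ (fun a => P a t₀) (fun a => u a y) (m t₀)
      fun x => (hm_pos x).ne'
  rw [hrate, show (fun t => m t y) = fun t => ∑ a, p₁ a * P a t y from funext fun t => hm t y]
  exact HasDerivAt.fun_sum fun a _ => (hP a y).const_mul (p₁ a)

/-- Marginal velocity identity of discrete flow matching: if each conditional path
`t ↦ P a t ·` satisfies the Kolmogorov forward equation with conditional velocity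
`u a` at `t₀`, then the mixture path `m t = ∑ a, p₁ a * P a t ·` satisfies the forward
equation at `t₀` with the posterior-averaged velocity `U y x = ∑ a, u a y x * π a x`,
where `π a x = p₁ a * P a t₀ x / m t₀ x` is the posterior. -/
theorem marginal_velocity_identity {S : Type*} [Fintype S]
    (p₁ : S → ℝ) (hp_nonneg : ∀ a, 0 ≤ p₁ a) (hp_sum : ∑ a, p₁ a = 1)
    (t₀ : ℝ)
    (P : S → ℝ → S → ℝ) (u : S → S → S → ℝ)
    (hP : ∀ a y, HasDerivAt (fun t => P a t y) (∑ x, u a y x * P a t₀ x) t₀)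
    (m : ℝ → S → ℝ) (hm : ∀ t y, m t y = ∑ a, p₁ a * P a t y)
    (hm_pos : ∀ x, 0 < m t₀ x)
    (post : S → S → ℝ) (hpost : ∀ a x, post a x = p₁ a * P a t₀ x / m t₀ x)
    (U : S → S → ℝ) (hU : ∀ y x, U y x = ∑ a, u a y x * post a x) :
    ∀ y : S, HasDerivAt (fun t => m t y) (∑ x, U y x * m t₀ x) t₀ :=
  marginal_velocity_identity_general p₁ t₀ P u hP m hm hm_pos post hpost U hU
end
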